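/- arXiv:2106.01588 — 3 statements merged into one kernel-verified Lean document; each statement's English description precedes it below -/
import Mathlib

section
/- Let $X_1, \dots, X_N$ be independent Bernoulli random variables, each with success probability $p \in (0,1)$, let $D \subseteq \{1,\dots,N\}$ with $|D| = 3 + \lfloor 3\log(pN)/(-\log(1-p)) \rfloor$, and let $d = \sum_{i \in D} X_i$ and $|S| = \sum_{i=1}^N X_i$. If $pN > 1$, then $\Pr[d \le 2] \cdot \mathbb{E}[|S| \mid d \le 2] \le 9$. -/
/-!
Split `|S| = d + T` with `T = ∑_{i ∉ D} X i`. On `{d ≤ 2}` the first summand is at most `2`, and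
`T` is independent of `d` with mean `|Dᶜ| p ≤ pN`, so the integral is at most
`(2 + pN) Pr[d ≤ 2]`. Since `d` is binomial with `|D|` trials, each of the three terms of
`Pr[d ≤ 2]` is at most `(pN)² (1 - p)^(|D| - 2)`, and the choice of `|D|` makes
`(1 - p)^(|D| - 2) ≤ (pN)⁻³`. Hence the integral is at most `3 (2 + pN) / (pN) ≤ 9`.
-/

open MeasureTheory ProbabilityTheory Finset

lemma choose_succ_mul_pow_mul_pow {R : Type*} [CommRing R] (n k : ℕ) (p q : R) :
    ((n + 1).choose (k + 1) : R) * p ^ (k + 1) * q ^ (n - k)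
      = q * ((n.choose (k + 1) : R) * p ^ (k + 1) * q ^ (n - (k + 1)))
        + p * ((n.choose k : R) * p ^ k * q ^ (n - k)) := by
  rw [Nat.choose_succ_succ']
  rcases le_or_gt (k + 1) n with hkn | hnk
  · obtain ⟨r, rfl⟩ := Nat.exists_eq_add_of_le hkn
    rw [show k + 1 + r - k = r + 1 by omega, show k + 1 + r - (k + 1) = r by omega]
    push_cast
    ring
  · rw [Nat.choose_eq_zero_of_lt hnk]
    push_cast
    ring

lemma choose_mul_pow_mul_pow_le {m j r : ℕ} {p y : ℝ} (hp0 : 0 ≤ p) (hp1 : p ≤ 1)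
    (hy : 1 ≤ y) (hmy : m * p ≤ y) (hjr : j ≤ r) :
    (m.choose j : ℝ) * p ^ j * (1 - p) ^ (m - j) ≤ y ^ r * (1 - p) ^ (m - r) := by
  have hchoose : (m.choose j : ℝ) * p ^ j ≤ y ^ r :=
    calc (m.choose j : ℝ) * p ^ j ≤ (m * p) ^ j := by
          rw [mul_pow]; gcongr; exact_mod_cast Nat.choose_le_pow m j
      _ ≤ y ^ j := by gcongr
      _ ≤ y ^ r := pow_le_pow_right₀ hy hjr
  exact mul_le_mul hchoose (pow_le_pow_of_le_one (by linarith) (by linarith) (by omega))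
    (by positivity) (by positivity)

lemma sum_choose_mul_pow_mul_pow_le {m r : ℕ} {p y : ℝ} (hp0 : 0 ≤ p) (hp1 : p ≤ 1)
    (hy : 1 ≤ y) (hmy : m * p ≤ y) :
    ∑ j ∈ range (r + 1), (m.choose j : ℝ) * p ^ j * (1 - p) ^ (m - j)
      ≤ (r + 1) * y ^ r * (1 - p) ^ (m - r) := by
  calc ∑ j ∈ range (r + 1), (m.choose j : ℝ) * p ^ j * (1 - p) ^ (m - j)
      ≤ ∑ _j ∈ range (r + 1), y ^ r * (1 - p) ^ (m - r) :=
        sum_le_sum fun j hj ↦ choose_mul_pow_mul_pow_le hp0 hp1 hy hmy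
          (Nat.lt_succ_iff.mp (mem_range.mp hj))
    _ = (r + 1) * y ^ r * (1 - p) ^ (m - r) := by simp [mul_assoc]

lemma pow_le_inv_pow_of_mul_log_div_lt {q y : ℝ} {a n : ℕ} (hq0 : 0 < q) (hq1 : q < 1)
    (hy : 0 < y) (h : a * Real.log y / -Real.log q < n) :
    q ^ n ≤ (y ^ a)⁻¹ := by
  have hlog : 0 < -Real.log q := neg_pos.mpr (Real.log_neg hq0 hq1)
  rw [div_lt_iff₀ hlog] at h
  rw [← Real.log_le_log_iff (by positivity) (by positivity), Real.log_inv, Real.log_pow,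
    Real.log_pow]
  nlinarith

lemma ProbabilityTheory.iIndepFun.indepFun_finsetSum_finsetSum {Ω ι M : Type*}
    [MeasurableSpace Ω] {μ : Measure Ω} [AddCommMonoid M] [MeasurableSpace M]
    [MeasurableAdd₂ M] {X : ι → Ω → M} (hindep : iIndepFun X μ) (hmeas : ∀ i, Measurable (X i))
    {S T : Finset ι} (hST : Disjoint S T) :
    IndepFun (fun ω ↦ ∑ i ∈ S, X i ω) (fun ω ↦ ∑ i ∈ T, X i ω) μ := by
  have hsum (U : Finset ι) : Measurable fun v : U → M ↦ ∑ i, v i :=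
    Finset.measurable_sum _ fun i _ ↦ measurable_pi_apply i
  have h := (hindep.indepFun_finset S T hST hmeas).comp (hsum S) (hsum T)
  convert h using 1 <;> funext ω <;> exact (Finset.sum_coe_sort _ (X · ω)).symm

lemma ProbabilityTheory.IndepFun.setIntegral_preimage_eq_integral_mul {Ω β : Type*}
    [MeasurableSpace Ω] {μ : Measure Ω} [MeasurableSpace β] {f : Ω → ℝ} {g : Ω → β}
    (h : IndepFun f g μ) (hf : AEStronglyMeasurable f μ) (hg : Measurable g) {s : Set β}
    (hs : MeasurableSet s) :
    ∫ ω in g ⁻¹' s, f ω ∂μ = (∫ ω, f ω ∂μ) * μ.real (g ⁻¹' s) := by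
  have hind : IndepFun f (fun ω ↦ (g ⁻¹' s).indicator (fun _ ↦ (1 : ℝ)) ω) μ :=
    h.comp measurable_id (measurable_const.indicator hs)
  have hprod :
      (g ⁻¹' s).indicator f = fun ω ↦ f ω * (g ⁻¹' s).indicator (fun _ ↦ (1 : ℝ)) ω := by
    ext ω
    by_cases hω : ω ∈ g ⁻¹' s <;> simp [hω]
  rw [← integral_indicator (hg hs), hprod, hind.integral_fun_mul_eq_mul_integral hf
    (aestronglyMeasurable_const.indicator (hg hs)), integral_indicator_const _ (hg hs),
    smul_eq_mul, mul_one]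

section Bernoulli

variable {Ω ι : Type*} {X : ι → Ω → ℕ} {p : ℝ}

lemma natCast_eq_indicator_of_bernoulli {i : ι} (hber : ∀ ω, X i ω = 0 ∨ X i ω = 1) :
    (fun ω ↦ (X i ω : ℝ)) = {ω | X i ω = 1}.indicator 1 := by
  ext ω
  rcases hber ω with h | h <;> simp [h]

variable [MeasurableSpace Ω] {μ : Measure Ω}

lemma integrable_natCast_of_bernoulli [IsFiniteMeasure μ] {i : ι} (hmeas : Measurable (X i))
    (hber : ∀ ω, X i ω = 0 ∨ X i ω = 1) : Integrable (fun ω ↦ (X i ω : ℝ)) μ := by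
  rw [natCast_eq_indicator_of_bernoulli hber]
  exact (integrable_const 1).indicator (hmeas (measurableSet_singleton 1))

lemma integrable_natCast_sum_of_bernoulli [IsFiniteMeasure μ] (hmeas : ∀ i, Measurable (X i))
    (hber : ∀ i ω, X i ω = 0 ∨ X i ω = 1) (A : Finset ι) :
    Integrable (fun ω ↦ ((∑ i ∈ A, X i ω : ℕ) : ℝ)) μ := by
  push_cast
  exact integrable_finsetSum A fun i _ ↦ integrable_natCast_of_bernoulli (hmeas i) (hber i)

lemma integral_sum_of_bernoulli [IsFiniteMeasure μ] (hmeas : ∀ i, Measurable (X i))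
    (hber : ∀ i ω, X i ω = 0 ∨ X i ω = 1) (hprob : ∀ i, μ.real {ω | X i ω = 1} = p)
    (A : Finset ι) :
    ∫ ω, ((∑ i ∈ A, X i ω : ℕ) : ℝ) ∂μ = A.card * p := by
  have hmean (i : ι) : ∫ ω, (X i ω : ℝ) ∂μ = p := by
    have hs : MeasurableSet {ω | X i ω = 1} := hmeas i (measurableSet_singleton 1)
    rw [natCast_eq_indicator_of_bernoulli (hber i), integral_indicator_one hs, hprob i]
  push_cast
  rw [integral_finsetSum _ fun i _ ↦ integrable_natCast_of_bernoulli (hmeas i) (hber i)]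
  simp [hmean]

variable [IsProbabilityMeasure μ]

lemma measureReal_eq_zero_of_bernoulli {i : ι} (hmeas : Measurable (X i))
    (hber : ∀ ω, X i ω = 0 ∨ X i ω = 1) (hprob : μ.real {ω | X i ω = 1} = p) :
    μ.real {ω | X i ω = 0} = 1 - p := by
  have hcompl : {ω | X i ω = 0} = {ω | X i ω = 1}ᶜ := by
    ext ω
    rcases hber ω with h | h <;> simp [h]
  have hset : MeasurableSet {ω | X i ω = 1} := hmeas (measurableSet_singleton 1)
  rw [hcompl, probReal_compl_eq_one_sub hset, hprob]

theorem measureReal_sum_eq_choose_mul_pow (hmeas : ∀ i, Measurable (X i))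
    (hber : ∀ i ω, X i ω = 0 ∨ X i ω = 1) (hprob : ∀ i, μ.real {ω | X i ω = 1} = p)
    (hindep : iIndepFun X μ) (A : Finset ι) (j : ℕ) :
    μ.real {ω | ∑ i ∈ A, X i ω = j} = A.card.choose j * p ^ j * (1 - p) ^ (A.card - j) := by
  classical
  induction A using Finset.induction_on generalizing j with
  | empty => cases j <;> simp
  | @insert a s ha ih =>
    set S : Ω → ℕ := fun ω ↦ ∑ i ∈ s, X i ω
    have hS : Measurable S := Finset.measurable_sum s fun i _ ↦ hmeas i
    have hindep_a : IndepFun (X a) S μ := by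
      convert (hindep.indepFun_finsetSum_of_notMem hmeas ha).symm
      ext ω
      simp [S]
    have hinter (u : ℕ) (t : Set ℕ) :
        μ.real ({ω | X a ω = u} ∩ S ⁻¹' t) = μ.real {ω | X a ω = u} * μ.real (S ⁻¹' t) := by
      simp only [measureReal_def, ← ENNReal.toReal_mul]
      exact congrArg _ (hindep_a.measure_inter_preimage_eq_mul {u} t
        (measurableSet_singleton u) (.of_discrete))
    have hsplit : {ω | ∑ i ∈ insert a s, X i ω = j}
        = ({ω | X a ω = 0} ∩ S ⁻¹' {j}) ∪ ({ω | X a ω = 1} ∩ S ⁻¹' {v | v + 1 = j}) := by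
      ext ω
      rcases hber a ω with h | h <;> simp [S, sum_insert ha, h, add_comm]
    have hdisj : Disjoint ({ω | X a ω = 0} ∩ S ⁻¹' {j})
        ({ω | X a ω = 1} ∩ S ⁻¹' {v | v + 1 = j}) :=
      Set.disjoint_left.mpr fun ω h0 h1 ↦ by simp_all
    have hmeas1 : MeasurableSet ({ω | X a ω = 1} ∩ S ⁻¹' {v | v + 1 = j}) :=
      (hmeas a (measurableSet_singleton 1)).inter (hS .of_discrete)
    rw [hsplit, measureReal_union hdisj hmeas1, hinter, hinter,
      measureReal_eq_zero_of_bernoulli (hmeas a) (hber a) (hprob a), hprob a,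
      card_insert_of_notMem ha]
    have ih' (j : ℕ) :
        μ.real (S ⁻¹' {j}) = s.card.choose j * p ^ j * (1 - p) ^ (s.card - j) := ih j
    cases j with
    | zero =>
      have hpre : S ⁻¹' {v | v + 1 = 0} = ∅ := by ext; simp
      rw [hpre, measureReal_empty, ih']
      simp [pow_succ, mul_comm]
    | succ k =>
      have hpre : S ⁻¹' {v | v + 1 = k + 1} = S ⁻¹' {k} := by ext; simp
      rw [hpre, ih', ih', Nat.add_sub_add_right, choose_succ_mul_pow_mul_pow]

theorem measureReal_sum_le_le_of_card_mul_le (hmeas : ∀ i, Measurable (X i))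
    (hber : ∀ i ω, X i ω = 0 ∨ X i ω = 1) (hprob : ∀ i, μ.real {ω | X i ω = 1} = p)
    (hindep : iIndepFun X μ) (hp0 : 0 ≤ p) (hp1 : p ≤ 1) {A : Finset ι} {y : ℝ} (hy : 1 ≤ y)
    (hAy : A.card * p ≤ y) (r : ℕ) :
    μ.real {ω | ∑ i ∈ A, X i ω ≤ r} ≤ (r + 1) * y ^ r * (1 - p) ^ (A.card - r) := by
  have hfib : {ω | ∑ i ∈ A, X i ω ≤ r} = (fun ω ↦ ∑ i ∈ A, X i ω) ⁻¹' ↑(range (r + 1)) := by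
    ext
    simp
  rw [hfib, ← sum_measureReal_preimage_singleton _
    fun j _ ↦ (Finset.measurable_sum A fun i _ ↦ hmeas i) (measurableSet_singleton j)]
  calc ∑ j ∈ range (r + 1), μ.real ((fun ω ↦ ∑ i ∈ A, X i ω) ⁻¹' {j})
      = ∑ j ∈ range (r + 1), (A.card.choose j : ℝ) * p ^ j * (1 - p) ^ (A.card - j) :=
        sum_congr rfl fun j _ ↦ measureReal_sum_eq_choose_mul_pow hmeas hber hprob hindep A j
    _ ≤ (r + 1) * y ^ r * (1 - p) ^ (A.card - r) := sum_choose_mul_pow_mul_pow_le hp0 hp1 hy hAy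

theorem setIntegral_sum_le [Fintype ι] [DecidableEq ι] (hmeas : ∀ i, Measurable (X i))
    (hber : ∀ i ω, X i ω = 0 ∨ X i ω = 1) (hprob : ∀ i, μ.real {ω | X i ω = 1} = p)
    (hindep : iIndepFun X μ) (D : Finset ι) (c : ℕ) :
    ∫ ω in {ω | ∑ i ∈ D, X i ω ≤ c}, ((∑ i, X i ω : ℕ) : ℝ) ∂μ
      ≤ (c + Dᶜ.card * p) * μ.real {ω | ∑ i ∈ D, X i ω ≤ c} := by
  set d : Ω → ℕ := fun ω ↦ ∑ i ∈ D, X i ω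
  have hd : Measurable d := Finset.measurable_sum D fun i _ ↦ hmeas i
  have hE : {ω | d ω ≤ c} = d ⁻¹' Set.Iic c := rfl
  have hsplit (ω : Ω) : ((∑ i, X i ω : ℕ) : ℝ) = (d ω : ℝ) + ((∑ i ∈ Dᶜ, X i ω : ℕ) : ℝ) := by
    rw [← sum_add_sum_compl D, Nat.cast_add]
  have hd_le : ∫ ω in {ω | d ω ≤ c}, (d ω : ℝ) ∂μ ≤ c * μ.real {ω | d ω ≤ c} := by
    rw [mul_comm, ← smul_eq_mul, ← setIntegral_const]
    refine setIntegral_mono_on (integrable_natCast_sum_of_bernoulli hmeas hber D).integrableOn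
      integrableOn_const (hd measurableSet_Iic) fun ω hω ↦ ?_
    exact_mod_cast hω
  have hindep_compl : IndepFun (fun ω ↦ ((∑ i ∈ Dᶜ, X i ω : ℕ) : ℝ)) d μ :=
    (hindep.indepFun_finsetSum_finsetSum hmeas disjoint_compl_left).comp
      measurable_from_nat measurable_id
  have hcompl : ∫ ω in {ω | d ω ≤ c}, ((∑ i ∈ Dᶜ, X i ω : ℕ) : ℝ) ∂μ
      = Dᶜ.card * p * μ.real {ω | d ω ≤ c} := by
    rw [hE, hindep_compl.setIntegral_preimage_eq_integral_mul
      (integrable_natCast_sum_of_bernoulli hmeas hber _).aestronglyMeasurable hd measurableSet_Iic,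
      integral_sum_of_bernoulli hmeas hber hprob]
  simp_rw [hsplit]
  rw [integral_add (integrable_natCast_sum_of_bernoulli hmeas hber D).integrableOn
    (integrable_natCast_sum_of_bernoulli hmeas hber _).integrableOn, hcompl]
  linarith

end Bernoulli

/-- For `N` independent Bernoulli(`p`) arrival indicators `X i`
(`0 < p < 1`), a set `D` of enforcers with `|D| = 3 + ⌊3 log(pN) / (-log(1-p))⌋`,
`d = ∑_{i ∈ D} X i` and `|S| = ∑_i X i`, if `pN > 1` then
`Pr[d ≤ 2] · E[|S| ∣ d ≤ 2] ≤ 9`, phrased as `∫_{d ≤ 2} |S| dμ ≤ 9`. -/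
theorem stochastic_few_enforcers_bound
    {Ω : Type*} [MeasurableSpace Ω] (μ : Measure Ω) [IsProbabilityMeasure μ]
    (N : ℕ) (p : ℝ) (hp : 0 < p) (hp1 : p < 1)
    (X : Fin N → Ω → ℕ)
    (hmeas : ∀ i, Measurable (X i))
    (hber : ∀ i ω, X i ω = 0 ∨ X i ω = 1)
    (hprob : ∀ i, μ {ω | X i ω = 1} = ENNReal.ofReal p)
    (hindep : iIndepFun X μ)
    (D : Finset (Fin N))
    (hD : D.card = 3 + ⌊3 * Real.log (p * N) / (-Real.log (1 - p))⌋₊)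
    (hpN : 1 < p * N) :
    ∫ ω in {ω | ∑ i ∈ D, X i ω ≤ 2}, ((∑ i, X i ω : ℕ) : ℝ) ∂μ ≤ 9 := by
  set y := p * N
  have hprob_real (i : Fin N) : μ.real {ω | X i ω = 1} = p := by
    rw [measureReal_def, hprob, ENNReal.toReal_ofReal hp.le]
  have hcard (A : Finset (Fin N)) : A.card * p ≤ y := by
    have hAN : (A.card : ℝ) ≤ N := by
      exact_mod_cast card_le_univ A |>.trans_eq (Fintype.card_fin N)
    nlinarith
  have hsurvive : (1 - p) ^ (D.card - 2) ≤ (y ^ 3)⁻¹ := by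
    rw [hD, show ∀ k, 3 + k - 2 = k + 1 by omega]
    exact pow_le_inv_pow_of_mul_log_div_lt (by linarith) (by linarith) (by linarith)
      (by exact_mod_cast Nat.lt_floor_add_one _)
  have hP : μ.real {ω | ∑ i ∈ D, X i ω ≤ 2} ≤ 3 / y :=
    calc μ.real {ω | ∑ i ∈ D, X i ω ≤ 2} ≤ (2 + 1) * y ^ 2 * (1 - p) ^ (D.card - 2) := by
          exact_mod_cast measureReal_sum_le_le_of_card_mul_le hmeas hber hprob_real hindep
            hp.le hp1.le hpN.le (hcard D) 2
      _ ≤ (2 + 1) * y ^ 2 * (y ^ 3)⁻¹ := by gcongr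
      _ = 3 / y := by field_simp; ring
  calc ∫ ω in {ω | ∑ i ∈ D, X i ω ≤ 2}, ((∑ i, X i ω : ℕ) : ℝ) ∂μ
      ≤ (2 + Dᶜ.card * p) * μ.real {ω | ∑ i ∈ D, X i ω ≤ 2} := by
        exact_mod_cast setIntegral_sum_le hmeas hber hprob_real hindep D 2
    _ ≤ (2 + y) * (3 / y) := by gcongr; exact hcard _
    _ ≤ 9 := by
        rw [mul_div_assoc', div_le_iff₀ (by linarith)]
        linarith
end

section
/- Let $p_1 \ge \dots \ge p_N$ be reals in $(0,1)$, let $X_i$ be independent Bernoulli$(p_i)$, $\tilde n = \sum_{i=1}^N p_i$, and suppose $\tilde n > 1$. Let $D = \{1, \dots, |D|\}$ be a prefix such that $\sum_{i=3}^{|D|} p_i = 3\log \tilde n$, and set $d = \sum_{i\in D} X_i$. Then $\Pr[d \le 2] \le \frac{3}{\tilde n}$. -/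
/-!
Chernoff's bound for the lower tail: for `t ≤ 0`,
`Pr[d ≤ 2] ≤ e^{-2t} E[e^{t d}] = e^{-2t} ∏ (1 + p_i (e^t - 1)) ≤ exp (-2t + σ (e^t - 1))`
with `σ = ∑_{i ∈ D} p_i ≥ 3 log ñ`. Taking `e^t = 2 / (3 log ñ)` gives at most
`(3/2 · log ñ)² e² ñ⁻³ ≤ 3 / ñ`, because `log ñ ≤ ñ / e`. When `3 log ñ < 2` there is nothing to
prove, since then `ñ < 3`.
-/

open MeasureTheory ProbabilityTheory Real

lemma exp_mul_eq_one_add_indicator {Ω : Type*} {Y : Ω → ℝ} (h01 : ∀ ω, Y ω = 0 ∨ Y ω = 1)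
    (t : ℝ) :
    (fun ω ↦ exp (t * Y ω)) = fun ω ↦ 1 + {ω | Y ω = 1}.indicator (fun _ ↦ exp t - 1) ω := by
  ext ω
  rcases h01 ω with h | h <;> simp [Set.indicator, h]

section ZeroOne

variable {Ω : Type*} [MeasurableSpace Ω] {μ : Measure Ω} {Y : Ω → ℝ}

lemma integrable_exp_mul_of_zero_or_one [IsFiniteMeasure μ] (hY : Measurable Y)
    (h01 : ∀ ω, Y ω = 0 ∨ Y ω = 1) (t : ℝ) : Integrable (fun ω ↦ exp (t * Y ω)) μ := by
  rw [exp_mul_eq_one_add_indicator h01]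
  exact (integrable_const 1).add ((integrable_const _).indicator (hY (measurableSet_singleton 1)))

lemma mgf_of_zero_or_one [IsProbabilityMeasure μ] (hY : Measurable Y)
    (h01 : ∀ ω, Y ω = 0 ∨ Y ω = 1) (t : ℝ) :
    mgf Y μ t = 1 + μ.real {ω | Y ω = 1} * (exp t - 1) := by
  have hS : MeasurableSet {ω | Y ω = 1} := hY (measurableSet_singleton 1)
  rw [mgf, exp_mul_eq_one_add_indicator h01, integral_add (integrable_const 1)
    ((integrable_const _).indicator hS), integral_const, integral_indicator_const _ hS]
  simp

lemma mgf_le_exp_of_zero_or_one [IsProbabilityMeasure μ] (hY : Measurable Y)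
    (h01 : ∀ ω, Y ω = 0 ∨ Y ω = 1) (t : ℝ) :
    mgf Y μ t ≤ exp (μ.real {ω | Y ω = 1} * (exp t - 1)) := by
  rw [mgf_of_zero_or_one hY h01, add_comm]
  exact add_one_le_exp _

end ZeroOne

section Chernoff

variable {Ω ι : Type*} [MeasurableSpace Ω] {μ : Measure Ω} [IsProbabilityMeasure μ]

theorem measureReal_sum_le_le_exp_of_zero_or_one {Y : ι → Ω → ℝ} (hY : ∀ i, Measurable (Y i))
    (h01 : ∀ i ω, Y i ω = 0 ∨ Y i ω = 1) (hindep : iIndepFun Y μ) (s : Finset ι) (k : ℝ)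
    {t : ℝ} (ht : t ≤ 0) :
    μ.real {ω | ∑ i ∈ s, Y i ω ≤ k} ≤
      exp (-t * k + (∑ i ∈ s, μ.real {ω | Y i ω = 1}) * (exp t - 1)) := by
  have hint := hindep.integrable_exp_mul_sum hY (s := s)
    fun i _ ↦ integrable_exp_mul_of_zero_or_one (hY i) (h01 i) t
  calc μ.real {ω | ∑ i ∈ s, Y i ω ≤ k}
      ≤ exp (-t * k) * mgf (∑ i ∈ s, Y i) μ t := by
        simpa only [Finset.sum_apply] using measure_le_le_exp_mul_mgf k ht hint
    _ = exp (-t * k) * ∏ i ∈ s, mgf (Y i) μ t := by rw [hindep.mgf_sum hY]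
    _ ≤ exp (-t * k) * ∏ i ∈ s, exp (μ.real {ω | Y i ω = 1} * (exp t - 1)) := by
        gcongr with i
        · exact fun i _ ↦ mgf_nonneg
        · exact mgf_le_exp_of_zero_or_one (hY i) (h01 i) t
    _ = _ := by rw [← exp_sum, ← exp_add, Finset.sum_mul]

theorem measure_sum_le_le_ofReal_exp_of_zero_or_one {X : ι → Ω → ℕ}
    (hX : ∀ i, Measurable (X i)) (h01 : ∀ i ω, X i ω = 0 ∨ X i ω = 1) (hindep : iIndepFun X μ)
    (s : Finset ι) (k : ℕ) {t : ℝ} (ht : t ≤ 0) :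
    μ {ω | ∑ i ∈ s, X i ω ≤ k} ≤
      ENNReal.ofReal (exp (-t * k + (∑ i ∈ s, μ.real {ω | X i ω = 1}) * (exp t - 1))) := by
  have hcast (i : ι) : {ω | (X i ω : ℝ) = 1} = {ω | X i ω = 1} := by ext; simp
  have hevent : {ω | ∑ i ∈ s, X i ω ≤ k} = {ω | ∑ i ∈ s, (X i ω : ℝ) ≤ k} := by
    ext
    norm_cast
  rw [hevent, ← ofReal_measureReal]
  gcongr
  simpa only [hcast] using measureReal_sum_le_le_exp_of_zero_or_one (Y := fun i ω ↦ (X i ω : ℝ))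
    (fun i ↦ measurable_from_nat.comp (hX i))
    (fun i ω ↦ by rcases h01 i ω with h | h <;> simp [h])
    (hindep.comp (fun _ ↦ Nat.cast) fun _ ↦ measurable_from_nat) s k ht

end Chernoff

/-- The choice `exp t = 2 / (3 L)` in Chernoff's bound; `L ≤ exp (L - 1)` does the rest. -/
lemma exp_chernoff_exponent_le_three_div_exp {L σ : ℝ} (hL : 2 / 3 ≤ L) (hσ : 3 * L ≤ σ) :
    exp (-log (3 * L / 2)⁻¹ * 2 + σ * ((3 * L / 2)⁻¹ - 1)) ≤ 3 / exp L := by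
  have ha : 1 ≤ 3 * L / 2 := by linarith
  have hLexp : L * exp (1 - L) ≤ 1 := by
    calc L * exp (1 - L) ≤ exp (L - 1) * exp (1 - L) := by
          gcongr; linarith [add_one_le_exp (L - 1)]
      _ = 1 := by rw [← exp_add]; simp
  have exp_two_mul (x : ℝ) : exp (2 * x) = exp x ^ 2 := by simpa using exp_nat_mul x 2
  calc exp (-log (3 * L / 2)⁻¹ * 2 + σ * ((3 * L / 2)⁻¹ - 1))
      ≤ exp (2 * log (3 * L / 2) + 3 * L * ((3 * L / 2)⁻¹ - 1)) := by
        rw [log_inv, neg_neg, mul_comm _ (2 : ℝ)]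
        exact exp_le_exp.mpr (add_le_add_right
          (mul_le_mul_of_nonpos_right hσ (sub_nonpos.mpr (inv_le_one_of_one_le₀ ha))) _)
    _ = 9 / 4 * (L * exp (1 - L)) ^ 2 / exp L := by
        have h : 3 * L * ((3 * L / 2)⁻¹ - 1) = 2 * (1 - L) - L := by field_simp; ring
        rw [h, exp_add, exp_sub, exp_two_mul, exp_two_mul, exp_log (by positivity)]
        ring
    _ ≤ 3 / exp L := by
        gcongr
        nlinarith [mul_nonneg (by linarith : (0:ℝ) ≤ L) (exp_pos (1 - L)).le]

lemma one_le_three_div_of_log_lt {x : ℝ} (hx : 1 < x) (hlog : log x < 2 / 3) : 1 ≤ 3 / x := by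
  rw [one_le_div (by linarith), ← exp_log (by linarith : 0 < x)]
  refine (exp_bound_div_one_sub_of_interval' (log_pos hx) (by linarith)).le.trans ?_
  rw [div_le_iff₀ (by linarith)]
  linarith

theorem prefix_enforcers_prob_bound_general
    {Ω : Type*} [MeasurableSpace Ω] (μ : Measure Ω) [IsProbabilityMeasure μ]
    (N Dc : ℕ) (p : ℕ → ℝ)
    (hp : ∀ i : ℕ, 1 ≤ i → i ≤ N → 0 < p i ∧ p i < 1)
    (X : ℕ → Ω → ℕ)
    (hmeas : ∀ i, Measurable (X i))
    (hber : ∀ i ω, X i ω = 0 ∨ X i ω = 1)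
    (hprob : ∀ i : ℕ, 1 ≤ i → i ≤ N → μ {ω | X i ω = 1} = ENNReal.ofReal (p i))
    (hindep : iIndepFun X μ)
    (hDc : Dc ≤ N)
    (hntilde : 1 < ∑ i ∈ Finset.Icc 1 N, p i)
    (hDsum : ∑ i ∈ Finset.Icc 3 Dc, p i = 3 * Real.log (∑ i ∈ Finset.Icc 1 N, p i)) :
    μ {ω | ∑ i ∈ Finset.Icc 1 Dc, X i ω ≤ 2} ≤
      ENNReal.ofReal (3 / ∑ i ∈ Finset.Icc 1 N, p i) := by
  set n := ∑ i ∈ Finset.Icc 1 N, p i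
  rcases lt_or_ge (log n) (2 / 3) with hsmall | hlarge
  · exact prob_le_one.trans
      (ENNReal.one_le_ofReal.mpr (one_le_three_div_of_log_lt hntilde hsmall))
  have hp_nonneg : ∀ i ∈ Finset.Icc 1 Dc, 0 ≤ p i := fun i hi ↦
    (hp i (Finset.mem_Icc.mp hi).1 ((Finset.mem_Icc.mp hi).2.trans hDc)).1.le
  have hXp : ∀ i ∈ Finset.Icc 1 Dc, μ.real {ω | X i ω = 1} = p i := fun i hi ↦ by
    rw [measureReal_def, hprob i (Finset.mem_Icc.mp hi).1 ((Finset.mem_Icc.mp hi).2.trans hDc),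
      ENNReal.toReal_ofReal (hp_nonneg i hi)]
  have hσ : 3 * log n ≤ ∑ i ∈ Finset.Icc 1 Dc, μ.real {ω | X i ω = 1} := by
    rw [Finset.sum_congr rfl hXp, ← hDsum]
    exact Finset.sum_le_sum_of_subset_of_nonneg (Finset.Icc_subset_Icc (by norm_num) le_rfl)
      fun i hi _ ↦ hp_nonneg i hi
  have ht : log (3 * log n / 2)⁻¹ ≤ 0 :=
    log_nonpos (by positivity) (inv_le_one_of_one_le₀ (by linarith))
  refine (measure_sum_le_le_ofReal_exp_of_zero_or_one hmeas hber hindep _ 2 ht).trans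
    (ENNReal.ofReal_le_ofReal ?_)
  calc _ ≤ 3 / exp (log n) := by
        rw [exp_log (by positivity)]
        exact_mod_cast exp_chernoff_exponent_le_three_div_exp hlarge hσ
    _ = 3 / n := by rw [exp_log (by linarith)]

/-- With agents `1, …, N` arriving independently, agent `i` with
probability `p i ∈ (0,1)`, probabilities sorted in nonincreasing order,
`ñ = ∑_{i=1}^N p i > 1`, and a prefix `D = {1, …, Dc}` of enforcers chosen so that
`∑_{i=3}^{Dc} p i = 3 log ñ`, the number of arriving enforcers
`d = ∑_{i=1}^{Dc} X i` satisfies `Pr[d ≤ 2] ≤ 3 / ñ`. -/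
theorem prefix_enforcers_prob_bound
    {Ω : Type*} [MeasurableSpace Ω] (μ : Measure Ω) [IsProbabilityMeasure μ]
    (N Dc : ℕ) (p : ℕ → ℝ)
    (hp : ∀ i : ℕ, 1 ≤ i → i ≤ N → 0 < p i ∧ p i < 1)
    (hsorted : ∀ i j : ℕ, 1 ≤ i → i ≤ j → j ≤ N → p j ≤ p i)
    (X : ℕ → Ω → ℕ)
    (hmeas : ∀ i, Measurable (X i))
    (hber : ∀ i ω, X i ω = 0 ∨ X i ω = 1)
    (hprob : ∀ i : ℕ, 1 ≤ i → i ≤ N → μ {ω | X i ω = 1} = ENNReal.ofReal (p i))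
    (hindep : iIndepFun X μ)
    (hDc : Dc ≤ N)
    (hntilde : 1 < ∑ i ∈ Finset.Icc 1 N, p i)
    (hDsum : ∑ i ∈ Finset.Icc 3 Dc, p i = 3 * Real.log (∑ i ∈ Finset.Icc 1 N, p i)) :
    μ {ω | ∑ i ∈ Finset.Icc 1 Dc, X i ω ≤ 2} ≤
      ENNReal.ofReal (3 / ∑ i ∈ Finset.Icc 1 N, p i) :=
  prefix_enforcers_prob_bound_general μ N Dc p hp X hmeas hber hprob hindep hDc hntilde hDsum
end

section
/- Under the capacitated-constant two-enforcer protocol, the profile constructed as follows is a pure Nash equilibrium when $n_r \le 2$: regular agents are placed according to Delayed-OPT (machines $1,\dots,r-1$ full, $n_r$ lowest-priority regular agents on machine $r$), and both enforcers are placed on machine $r-1$ (replacing two regular-agent slots, with $r \ge 2$). In this profile: each enforcer pays $\varepsilon_{r-1}$ and has no profitable deviation; each zero-paying regular agent has no profitable deviation; and each regular agent paying a positive share ($c_j$ or $T_j$ on machine $j < r$, or $T_r$ on machine $r$) has no profitable deviation. -/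
open scoped Classical

noncomputable section

/-- Load of machine `j` under profile `s`. -/
def mload {A : Type*} [Fintype A] {m : ℕ} (s : A → Fin m) (j : Fin m) : ℕ :=
  (Finset.univ.filter fun i => s i = j).card

/-- Cumulative cost `T j = ∑_{k ≤ j} c k` of the first machines in the
Delayed-OPT order. -/
def cumCost {m : ℕ} (c : Fin m → ℝ) (j : Fin m) : ℝ :=
  ∑ k ∈ Finset.Iic j, c k

/-- Cost share of agent `i` under profile `s` in the capacitated-constant
two-enforcer protocol (see STATEMENT 16). -/
def share {A : Type*} [Fintype A] [LinearOrder A] {m : ℕ}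
    (c : Fin m → ℝ) (u : Fin m → ℕ) (ε : Fin m → ℝ)
    (e1 e2 : A) (s : A → Fin m) (i : A) : EReal :=
  let j := s i
  let ld := mload s j
  if i = e1 ∨ i = e2 then
    if ld ≤ u j ∧ s e1 = j ∧ s e2 = j ∧ (∃ i', i' ≠ e1 ∧ i' ≠ e2 ∧ s i' = j) then
      (ε j : EReal)
    else if u j < ld ∧ ((i = e1 ∧ s e2 ≠ j) ∨ (i = e2 ∧ s e1 ≠ j)) then
      (ε j : EReal)
    else (cumCost c j : EReal)
  else
    if u j < ld then (⊤ : EReal)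
    else if ¬ (∀ i', i' ≠ e1 → i' ≠ e2 → s i' = j → i ≤ i') then 0
    else if ld = u j ∧ s e1 ≠ j ∧ s e2 ≠ j then (c j : EReal)
    else (cumCost c j : EReal)

/-!
Both enforcers sit with regular agents on the full machine `r - 1` and pay `ε (r - 1)`. An
enforcer that leaves ends up apart from its partner: on a full machine further left it is alone
over capacity and pays the larger penalty `ε j`; further right there is spare capacity, so it pays
`T j ≥ c 0 > ε (r - 1)`. A regular agent that is not the highest-priority one on its machine pays
nothing. The highest-priority one pays at most `T` of its machine; moving left overloads a full
machine, and moving right lands it on a machine below capacity whose only regular agents are the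
lowest-priority ones on `r`, so it becomes the highest-priority agent there and pays the larger
`T j'`.
-/

section Load

variable {A : Type*} [Fintype A] {m : ℕ}

lemma one_le_mload (s : A → Fin m) (i : A) : 1 ≤ mload s (s i) :=
  Finset.card_pos.2 ⟨i, by simp⟩

lemma mload_update_of_ne [DecidableEq A] (s : A → Fin m) {i : A} {j : Fin m} (h : s i ≠ j) :
    mload (Function.update s i j) j = mload s j + 1 := by
  have hset : (Finset.univ.filter fun x => Function.update s i j x = j)
      = insert i (Finset.univ.filter fun x => s x = j) := by
    ext x
    by_cases hx : x = i <;> simp [hx, h]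
  rw [mload, hset, Finset.card_insert_of_notMem (by simp [h]), mload]

lemma exists_ne_ne_of_two_lt_mload (s : A → Fin m) (e1 e2 : A) {j : Fin m}
    (h : 2 < mload s j) : ∃ i, i ≠ e1 ∧ i ≠ e2 ∧ s i = j := by
  by_contra! hnone
  have hsub : (Finset.univ.filter fun x => s x = j) ⊆ {e1, e2} := by
    intro x hx
    have hx : s x = j := by simpa using hx
    by_contra hx2
    simp only [Finset.mem_insert, Finset.mem_singleton, not_or] at hx2
    exact hnone x hx2.1 hx2.2 hx
  have := (Finset.card_le_card hsub).trans (Finset.card_le_two (a := e1) (b := e2))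
  exact absurd this (by simpa [mload] using h)

end Load

section CumCost

variable {m : ℕ} {c : Fin m → ℝ}

lemma le_cumCost (hc : ∀ j, 0 ≤ c j) {k j : Fin m} (h : k ≤ j) : c k ≤ cumCost c j :=
  Finset.single_le_sum (fun x _ => hc x) (Finset.mem_Iic.2 h)

lemma cumCost_nonneg (hc : ∀ j, 0 ≤ c j) (j : Fin m) : 0 ≤ cumCost c j :=
  Finset.sum_nonneg fun k _ => hc k

lemma cumCost_mono (hc : ∀ j, 0 ≤ c j) : Monotone (cumCost c) := fun _ _ h =>
  Finset.sum_le_sum_of_subset_of_nonneg (Finset.Iic_subset_Iic.2 h) fun k _ _ => hc k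

end CumCost

section Share

variable {A : Type*} [Fintype A] [LinearOrder A] {m : ℕ}
  {c : Fin m → ℝ} {u : Fin m → ℕ} {ε : Fin m → ℝ} {e1 e2 : A} {s : A → Fin m} {i : A}

lemma share_of_enforcers_together (hi : i = e1 ∨ i = e2) (h1 : s e1 = s i) (h2 : s e2 = s i)
    (hcap : mload s (s i) ≤ u (s i)) (hreg : ∃ i', i' ≠ e1 ∧ i' ≠ e2 ∧ s i' = s i) :
    share c u ε e1 e2 s i = ε (s i) := by
  unfold share
  rw [if_pos hi, if_pos ⟨hcap, h1, h2, hreg⟩]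

lemma share_of_enforcers_apart (hi : i = e1 ∨ i = e2) (hsep : s e1 ≠ s e2) :
    share c u ε e1 e2 s i =
      if u (s i) < mload s (s i) then (ε (s i) : EReal) else (cumCost c (s i) : EReal) := by
  have hpartner : (i = e1 ∧ s e2 ≠ s i) ∨ (i = e2 ∧ s e1 ≠ s i) := by
    rcases hi with rfl | rfl
    exacts [Or.inl ⟨rfl, hsep.symm⟩, Or.inr ⟨rfl, hsep⟩]
  unfold share
  rw [if_pos hi, if_neg fun h => hsep (h.2.1.trans h.2.2.1.symm)]
  split_ifs with hover <;> simp_all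

lemma share_of_overload (hi1 : i ≠ e1) (hi2 : i ≠ e2) (hover : u (s i) < mload s (s i)) :
    share c u ε e1 e2 s i = ⊤ := by
  simp [share, hi1, hi2, hover]

lemma share_of_not_highest (hi1 : i ≠ e1) (hi2 : i ≠ e2) (hcap : mload s (s i) ≤ u (s i))
    (hhigher : ∃ i', i' ≠ e1 ∧ i' ≠ e2 ∧ s i' = s i ∧ i' < i) :
    share c u ε e1 e2 s i = 0 := by
  obtain ⟨i', h1, h2, h3, h4⟩ := hhigher
  have : ¬ ∀ i', i' ≠ e1 → i' ≠ e2 → s i' = s i → i ≤ i' :=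
    fun h => (h i' h1 h2 h3).not_gt h4
  simp only [share, hi1, hi2, or_self, if_false, if_neg hcap.not_gt, if_pos this]

lemma share_of_highest_of_lt (hi1 : i ≠ e1) (hi2 : i ≠ e2) (hcap : mload s (s i) < u (s i))
    (hhighest : ∀ i', i' ≠ e1 → i' ≠ e2 → s i' = s i → i ≤ i') :
    share c u ε e1 e2 s i = cumCost c (s i) := by
  simp only [share, hi1, hi2, or_self, if_false, if_neg hcap.le.not_gt,
    if_neg (not_not.2 hhighest), hcap.ne, false_and]

lemma share_le_cumCost (hc : ∀ j, 0 ≤ c j) (hi1 : i ≠ e1) (hi2 : i ≠ e2)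
    (hcap : mload s (s i) ≤ u (s i)) : share c u ε e1 e2 s i ≤ cumCost c (s i) := by
  simp only [share, hi1, hi2, or_self, if_false, if_neg hcap.not_gt]
  split_ifs <;> simp [le_cumCost hc le_rfl, cumCost_nonneg hc]

lemma share_nonneg (hc : ∀ j, 0 ≤ c j) (hi1 : i ≠ e1) (hi2 : i ≠ e2) :
    0 ≤ share c u ε e1 e2 s i := by
  simp only [share, hi1, hi2, or_self, if_false]
  split_ifs <;> simp [hc, cumCost_nonneg hc]

end Share

section Deviation

variable {A : Type*} [Fintype A] [LinearOrder A] {m : ℕ}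
  {c : Fin m → ℝ} {u : Fin m → ℕ} {ε : Fin m → ℝ} {e1 e2 : A} {s : A → Fin m} {i : A}

lemma share_le_share_update_of_enforcer (hne : e1 ≠ e2) (hε : StrictAnti ε)
    (hi : i = e1 ∨ i = e2) (he : s e1 = s e2) (hu : 2 < u (s i))
    (hfull : ∀ j ≤ s i, mload s j = u j) (hspare : ∀ j, s i < j → mload s j < u j)
    (hεT : ∀ j, ε (s i) ≤ cumCost c j) (j' : Fin m) :
    share c u ε e1 e2 s i ≤ share c u ε e1 e2 (Function.update s i j') i := by
  rcases eq_or_ne (s i) j' with rfl | hdev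
  · rw [Function.update_eq_self]
  have hpartners : s e1 = s i ∧ s e2 = s i := by rcases hi with rfl | rfl <;> simp [he]
  have hold : share c u ε e1 e2 s i = ε (s i) :=
    share_of_enforcers_together hi hpartners.1 hpartners.2 (hfull _ le_rfl).le
      (exists_ne_ne_of_two_lt_mload s e1 e2 (by rwa [hfull _ le_rfl]))
  have hsep : Function.update s i j' e1 ≠ Function.update s i j' e2 := by
    rcases hi with rfl | rfl
    · rw [Function.update_self, Function.update_of_ne hne.symm, ← he]; exact hdev.symm
    · rw [Function.update_self, Function.update_of_ne hne, he]; exact hdev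
  rw [hold, share_of_enforcers_apart hi hsep, Function.update_self, mload_update_of_ne s hdev]
  rcases hdev.lt_or_gt with hright | hleft
  · rw [if_neg (by have := hspare j' hright; omega)]
    exact EReal.coe_le_coe_iff.2 (hεT j')
  · rw [if_pos (by rw [hfull j' hleft.le]; omega)]
    exact EReal.coe_le_coe_iff.2 (hε hleft).le

lemma share_le_share_update_of_regular (hc : ∀ j, 0 ≤ c j) (hi1 : i ≠ e1) (hi2 : i ≠ e2)
    {r : Fin m} (hfull : ∀ j < r, mload s j = u j) (hspare : ∀ j, r ≤ j → mload s j + 2 ≤ u j)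
    (hbeyond : ∀ x, s x ≤ r)
    (hlow : ∀ i i' : A, i ≠ e1 → i ≠ e2 → s i = r → i' ≠ e1 → i' ≠ e2 → s i' ≠ r → i' < i)
    (j' : Fin m) :
    share c u ε e1 e2 s i ≤ share c u ε e1 e2 (Function.update s i j') i := by
  rcases eq_or_ne (s i) j' with rfl | hdev
  · rw [Function.update_eq_self]
  have hcap : mload s (s i) ≤ u (s i) := by
    rcases (hbeyond i).lt_or_eq with h | h
    · exact (hfull _ h).le
    · have := hspare _ h.ge; omega
  by_cases hhighest : ∀ i', i' ≠ e1 → i' ≠ e2 → s i' = s i → i ≤ i'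
  swap
  · push Not at hhighest
    rw [share_of_not_highest hi1 hi2 hcap hhighest]
    exact share_nonneg hc hi1 hi2
  rcases lt_or_ge j' r with hleft | hright
  · rw [share_of_overload (s := Function.update s i j') hi1 hi2 (by
      rw [Function.update_self, mload_update_of_ne s hdev, hfull _ hleft]; omega)]
    exact le_top
  have hhighest' : ∀ i', i' ≠ e1 → i' ≠ e2 →
      Function.update s i j' i' = Function.update s i j' i → i ≤ i' := by
    intro i' h1 h2 h3
    rcases eq_or_ne i' i with rfl | hi'
    · exact le_rfl
    rw [Function.update_self, Function.update_of_ne hi'] at h3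
    have hj' : j' = r := le_antisymm (h3 ▸ hbeyond i') hright
    exact (hlow i' i h1 h2 (h3.trans hj') hi1 hi2 fun h => hdev (h.trans hj'.symm)).le
  rw [share_of_highest_of_lt (s := Function.update s i j') hi1 hi2 (by
      rw [Function.update_self, mload_update_of_ne s hdev]; have := hspare j' hright; omega)
    hhighest', Function.update_self]
  exact (share_le_cumCost hc hi1 hi2 hcap).trans
    (EReal.coe_le_coe_iff.2 (cumCost_mono hc ((hbeyond i).trans hright)))

end Deviation

theorem constructed_profile_is_nash_general {A : Type*} [Fintype A] [LinearOrder A] {m : ℕ}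
    (hm : 0 < m) (c : Fin m → ℝ) (u : Fin m → ℕ) (ε : Fin m → ℝ)
    (hc : ∀ j, 0 < c j) (hu : ∀ j, 4 ≤ u j)
    (hεdec : ∀ j j' : Fin m, j < j' → ε j' < ε j)
    (hεsmall : ∀ j, ε j < c ⟨0, hm⟩)
    (e1 e2 : A) (hne : e1 ≠ e2)
    (r : Fin m) (hr : 1 ≤ (r : ℕ))
    (s : A → Fin m)
    -- both enforcers are on machine `r - 1`
    (henf1 : s e1 = ⟨(r : ℕ) - 1, lt_of_le_of_lt (Nat.sub_le _ _) r.2⟩)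
    (henf2 : s e2 = ⟨(r : ℕ) - 1, lt_of_le_of_lt (Nat.sub_le _ _) r.2⟩)
    -- machines before `r` are full, machines after `r` are empty
    (hfull : ∀ j : Fin m, (j : ℕ) < (r : ℕ) → mload s j = u j)
    (hempty : ∀ j : Fin m, (r : ℕ) < (j : ℕ) → mload s j = 0)
    -- machine `r` carries `n_r` agents with `1 ≤ n_r ≤ 2`
    (hnr2 : mload s r ≤ 2)
    -- the regular agents on machine `r` are the lowest-priority regular agents
    (hlow : ∀ i i' : A, i ≠ e1 → i ≠ e2 → s i = r →
      i' ≠ e1 → i' ≠ e2 → s i' ≠ r → i' < i) :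
    ∀ (i : A) (j' : Fin m),
      share c u ε e1 e2 s i ≤ share c u ε e1 e2 (Function.update s i j') i := by
  intro i j'
  have hc' : ∀ j, 0 ≤ c j := fun j => (hc j).le
  have hfull' : ∀ j < r, mload s j = u j := fun j hj => hfull j hj
  have hspare : ∀ j, r ≤ j → mload s j + 2 ≤ u j := by
    intro j hj
    have := hu j
    rcases hj.lt_or_eq with h | rfl
    · have := hempty j h; omega
    · omega
  have hbeyond : ∀ x, s x ≤ r := fun x => not_lt.1 fun h => by
    have := hempty _ h
    have := one_le_mload s x
    omega
  by_cases hie : i = e1 ∨ i = e2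
  · have hsi : s i = s e1 := by rcases hie with rfl | rfl; exacts [rfl, henf2.trans henf1.symm]
    have hsucc : (s i : ℕ) + 1 = r := by rw [hsi, henf1]; exact Nat.sub_add_cancel hr
    refine share_le_share_update_of_enforcer hne (fun j j' h => hεdec j j' h) hie
      (henf1.trans henf2.symm) (by have := hu (s i); omega)
      (fun j hj => hfull' j (Fin.lt_def.2 (by rw [Fin.le_def] at hj; omega)))
      (fun j hj => ?_) (fun j => (hεsmall _).le.trans (le_cumCost hc' (Nat.zero_le _))) j'
    have := hspare j (Fin.le_def.2 (by rw [Fin.lt_def] at hj; omega))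
    omega
  · push Not at hie
    exact share_le_share_update_of_regular hc' hie.1 hie.2 hfull' hspare hbeyond hlow j'

/-- Under the capacitated-constant two-enforcer protocol, the
profile in which machines `1, …, r-1` are full, the `n_r ∈ {1,2}` lowest-priority
regular agents sit on machine `r`, machines after `r` are empty, and both
enforcers sit on machine `r-1`, is a pure Nash equilibrium. -/
theorem constructed_profile_is_nash {A : Type*} [Fintype A] [LinearOrder A] {m : ℕ}
    (hm : 0 < m) (c : Fin m → ℝ) (u : Fin m → ℕ) (ε : Fin m → ℝ)
    (hc : ∀ j, 0 < c j) (hu : ∀ j, 4 ≤ u j)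
    (hεpos : ∀ j, 0 < ε j)
    (hεdec : ∀ j j' : Fin m, j < j' → ε j' < ε j)
    (hεsmall : ∀ j, ε j < c ⟨0, hm⟩)
    (e1 e2 : A) (hne : e1 ≠ e2)
    (r : Fin m) (hr : 1 ≤ (r : ℕ))
    (s : A → Fin m)
    -- both enforcers are on machine `r - 1`
    (henf1 : s e1 = ⟨(r : ℕ) - 1, lt_of_le_of_lt (Nat.sub_le _ _) r.2⟩)
    (henf2 : s e2 = ⟨(r : ℕ) - 1, lt_of_le_of_lt (Nat.sub_le _ _) r.2⟩)
    -- machines before `r` are full, machines after `r` are empty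
    (hfull : ∀ j : Fin m, (j : ℕ) < (r : ℕ) → mload s j = u j)
    (hempty : ∀ j : Fin m, (r : ℕ) < (j : ℕ) → mload s j = 0)
    -- machine `r` carries `n_r` agents with `1 ≤ n_r ≤ 2`
    (hnr1 : 1 ≤ mload s r) (hnr2 : mload s r ≤ 2)
    -- the regular agents on machine `r` are the lowest-priority regular agents
    (hlow : ∀ i i' : A, i ≠ e1 → i ≠ e2 → s i = r →
      i' ≠ e1 → i' ≠ e2 → s i' ≠ r → i' < i) :
    ∀ (i : A) (j' : Fin m),
      share c u ε e1 e2 s i ≤ share c u ε e1 e2 (Function.update s i j') i :=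
  constructed_profile_is_nash_general hm c u ε hc hu hεdec hεsmall e1 e2 hne r hr s henf1 henf2
    hfull hempty hnr2 hlow

end
end
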